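/- Let x₂ be a real random variable taking finitely many values with probability mass function p₂, let snr, h₁₁, h₁₂, P₂ be positive reals, and for P₁ ≥ 0 set σ²(P₁) = h₁₁²·P₁ + 1 and y = √snr·h₁₂·√P₂·x₂ + σ(P₁)·n, with n a standard real Gaussian independent of x₂. Define p_{y|x₂}(y|x₂) = (1/σ(P₁))·φ((y − √snr·h₁₂·√P₂·x₂)/σ(P₁)) with φ the standard normal density, p_y(y) = Σ_{x₂} p₂(x₂)·p_{y|x₂}(y|x₂), I(P₁) = ∫ Σ_{x₂} p₂(x₂)·p_{y|x₂}(y|x₂)·log(p_{y|x₂}(y|x₂)/p_y(y)) dy, and E₂₂(P₁) = E[(x₂ − E[x₂|y])²] with E[x₂|y] = Σ_{x₂} x₂·p₂(x₂)·p_{y|x₂}(y|x₂)/p_y(y). Then I is differentiable in P₁ and dI/dP₁ = −(snr·h₁₁²·h₁₂²·P₂)/(2·(h₁₁²·P₁ + 1)²)·E₂₂(P₁). -/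

import Mathlib

/-!
Write `s = h₁₁² P₁ + 1` for the total noise variance, `gⱼ` for the Gaussian density of variance `s`
centred at `μⱼ = √snr h₁₂ √P₂ vⱼ`, and `P = ∑ⱼ p₂(j) gⱼ`; then `I` is
`s ↦ ∫ ∑ⱼ p₂(j) gⱼ log (gⱼ / P)`. All integrands involved are bounded, locally uniformly in `s`,
by a polynomial times a fixed Gaussian in `y`, so one may differentiate under the integral sign.
By the heat equation `∂ₛ gⱼ = ½ ∂ᵧ² gⱼ` the derivative is `½ ∫ ∑ⱼ p₂(j) ∂ᵧ² gⱼ log (gⱼ / P)`.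
Integrating by parts in `y` turns this into `-½ ∫ (∑ⱼ p₂(j) (∂ᵧ gⱼ)² / gⱼ - (∂ᵧ P)² / P)`, and as
`∂ᵧ gⱼ / gⱼ = (μⱼ - y) / s` the integrand is `s⁻²` times the posterior variance of `μ` given `y`,
weighted by `P`. The chain rule in `P₁` contributes the factor `h₁₁²`.
-/

open MeasureTheory Finset Real

def PolyGaussBounded (S : Set ℝ) (β : ℝ) (F : ℝ → ℝ → ℝ) : Prop :=
  ∃ C, 0 ≤ C ∧ ∃ k : ℕ, ∀ s ∈ S, ∀ y, |F s y| ≤ C * (1 + y ^ 2) ^ k * exp (-β * y ^ 2)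

lemma one_add_sq_pow_mul_exp_le {β : ℝ} (hβ : 0 < β) (k : ℕ) (y : ℝ) :
    (1 + y ^ 2) ^ k * exp (-β * y ^ 2) ≤
      k.factorial / (β / 2) ^ k * exp (β / 2) * exp (-(β / 2) * y ^ 2) := by
  have h := pow_div_factorial_le_exp (x := β / 2 * (1 + y ^ 2)) (by positivity) k
  rw [div_le_iff₀ (by positivity), mul_pow] at h
  calc (1 + y ^ 2) ^ k * exp (-β * y ^ 2)
      ≤ exp (β / 2 * (1 + y ^ 2)) * k.factorial / (β / 2) ^ k * exp (-β * y ^ 2) := by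
        gcongr
        rw [le_div_iff₀ (by positivity)]
        linarith
    _ = k.factorial / (β / 2) ^ k * (exp (β / 2 * (1 + y ^ 2)) * exp (-β * y ^ 2)) := by ring
    _ = _ := by rw [mul_assoc, ← exp_add, ← exp_add]; ring_nf

lemma integrable_one_add_sq_pow_mul_exp {β : ℝ} (hβ : 0 < β) (k : ℕ) :
    Integrable fun y : ℝ => (1 + y ^ 2) ^ k * exp (-β * y ^ 2) := by
  refine ((integrable_exp_neg_mul_sq (half_pos hβ)).const_mul
    (k.factorial / (β / 2) ^ k * exp (β / 2))).mono' (by fun_prop) (ae_of_all _ fun y => ?_)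
  rw [Real.norm_of_nonneg (by positivity)]
  exact one_add_sq_pow_mul_exp_le hβ k y

namespace PolyGaussBounded

variable {S : Set ℝ} {β : ℝ} {F G : ℝ → ℝ → ℝ}

lemma mono (hF : PolyGaussBounded S β F) (h : ∀ s ∈ S, ∀ y, |G s y| ≤ |F s y|) :
    PolyGaussBounded S β G := by
  obtain ⟨C, hC, k, hk⟩ := hF
  exact ⟨C, hC, k, fun s hs y => (h s hs y).trans (hk s hs y)⟩

lemma congr (hF : PolyGaussBounded S β F) (h : ∀ s ∈ S, ∀ y, F s y = G s y) :
    PolyGaussBounded S β G :=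
  hF.mono fun s hs y => (h s hs y).symm ▸ le_rfl

lemma const (c : ℝ) : PolyGaussBounded S 0 fun _ _ => c :=
  ⟨|c|, abs_nonneg c, 0, fun _ _ _ => by simp⟩

lemma of_continuousOn {f : ℝ → ℝ} (hS : IsCompact S) (hf : ContinuousOn f S) :
    PolyGaussBounded S 0 fun s _ => f s := by
  obtain ⟨C, hC⟩ := hS.exists_bound_of_continuousOn hf
  refine ⟨max C 0, le_max_right _ _, 0, fun s hs y => ?_⟩
  simpa using (hC s hs).trans (le_max_left C 0)

lemma id_right : PolyGaussBounded S 0 fun _ y => y := by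
  refine ⟨1, zero_le_one, 1, fun _ _ y => ?_⟩
  simp only [neg_zero, zero_mul, exp_zero, mul_one, one_mul, pow_one]
  nlinarith [abs_mul_abs_self y, abs_nonneg y]

lemma add (hF : PolyGaussBounded S β F) (hG : PolyGaussBounded S β G) :
    PolyGaussBounded S β fun s y => F s y + G s y := by
  obtain ⟨C, hC, k, hk⟩ := hF
  obtain ⟨D, hD, m, hm⟩ := hG
  refine ⟨C + D, by positivity, k + m, fun s hs y => ?_⟩
  have h1 : (1 : ℝ) ≤ 1 + y ^ 2 := by nlinarith [sq_nonneg y]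
  have hk' := pow_le_pow_right₀ h1 (Nat.le_add_right k m)
  have hm' := pow_le_pow_right₀ h1 (Nat.le_add_left m k)
  have he := exp_pos (-β * y ^ 2)
  calc |F s y + G s y| ≤ |F s y| + |G s y| := abs_add_le _ _
    _ ≤ C * (1 + y ^ 2) ^ k * exp (-β * y ^ 2) + D * (1 + y ^ 2) ^ m * exp (-β * y ^ 2) :=
        add_le_add (hk s hs y) (hm s hs y)
    _ ≤ _ := by
        rw [add_mul, add_mul]
        gcongr

lemma neg (hF : PolyGaussBounded S β F) : PolyGaussBounded S β fun s y => -F s y :=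
  hF.mono fun s _ y => (abs_neg (F s y)).le

lemma sub (hF : PolyGaussBounded S β F) (hG : PolyGaussBounded S β G) :
    PolyGaussBounded S β fun s y => F s y - G s y := by
  simpa only [sub_eq_add_neg] using hF.add hG.neg

lemma mul (hF : PolyGaussBounded S β F) (hG : PolyGaussBounded S 0 G) :
    PolyGaussBounded S β fun s y => F s y * G s y := by
  obtain ⟨C, hC, k, hk⟩ := hF
  obtain ⟨D, hD, m, hm⟩ := hG
  refine ⟨C * D, by positivity, k + m, fun s hs y => ?_⟩
  rw [abs_mul]
  calc |F s y| * |G s y|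
      ≤ (C * (1 + y ^ 2) ^ k * exp (-β * y ^ 2)) * (D * (1 + y ^ 2) ^ m * exp (-0 * y ^ 2)) :=
        mul_le_mul (hk s hs y) (hm s hs y) (abs_nonneg _) (by positivity)
    _ = _ := by rw [pow_add, neg_zero, zero_mul, exp_zero]; ring

lemma sum {ι : Type*} (t : Finset ι) {F : ι → ℝ → ℝ → ℝ}
    (h : ∀ j ∈ t, PolyGaussBounded S β (F j)) :
    PolyGaussBounded S β fun s y => ∑ j ∈ t, F j s y := by
  classical
  induction t using Finset.induction_on with
  | empty => exact ⟨0, le_rfl, 0, fun s _ y => by simp⟩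
  | insert j t hj ih =>
    simp only [Finset.sum_insert hj]
    exact (h j (mem_insert_self j t)).add (ih fun i hi => h i (mem_insert_of_mem hi))

lemma exists_integrable_bound (hF : PolyGaussBounded S β F) (hβ : 0 < β) :
    ∃ bound : ℝ → ℝ, Integrable bound ∧ ∀ s ∈ S, ∀ y, |F s y| ≤ bound y := by
  obtain ⟨C, -, k, hk⟩ := hF
  exact ⟨fun y => C * ((1 + y ^ 2) ^ k * exp (-β * y ^ 2)),
    (integrable_one_add_sq_pow_mul_exp hβ k).const_mul C,
    fun s hs y => (hk s hs y).trans_eq (mul_assoc _ _ _)⟩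

lemma integrable (hF : PolyGaussBounded S β F) (hβ : 0 < β) {s : ℝ} (hs : s ∈ S)
    (hmeas : AEStronglyMeasurable (F s)) : Integrable (F s) := by
  obtain ⟨bound, hint, hbound⟩ := hF.exists_integrable_bound hβ
  exact hint.mono' hmeas (ae_of_all _ fun y => hbound s hs y)

end PolyGaussBounded

noncomputable def gaussKernel (s x : ℝ) : ℝ := (√(2 * π * s))⁻¹ * exp (-x ^ 2 / (2 * s))

section GaussKernel

variable {s : ℝ}

lemma gaussKernel_pos (hs : 0 < s) (x : ℝ) : 0 < gaussKernel s x := by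
  unfold gaussKernel; positivity

@[fun_prop]
lemma continuous_gaussKernel (s : ℝ) : Continuous (gaussKernel s) := by
  unfold gaussKernel; fun_prop

lemma gaussKernel_le (hs : 0 ≤ s) (x : ℝ) : gaussKernel s x ≤ (√(2 * π * s))⁻¹ := by
  have hx := sq_nonneg x
  exact mul_le_of_le_one_right (by positivity)
    (exp_le_one_iff.mpr (div_nonpos_of_nonpos_of_nonneg (by linarith) (by positivity)))

lemma gaussKernel_eq_div_sqrt (hs : 0 ≤ s) (x : ℝ) :
    gaussKernel s x = 1 / √s * ((√(2 * π))⁻¹ * exp (-(x / √s) ^ 2 / 2)) := by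
  have hexp : -(x / √s) ^ 2 / 2 = -x ^ 2 / (2 * s) := by rw [div_pow, sq_sqrt hs]; ring
  rw [hexp, gaussKernel, sqrt_mul (by positivity), mul_inv]
  ring

lemma log_gaussKernel (hs : 0 < s) (x : ℝ) :
    log (gaussKernel s x) = -log (2 * π * s) / 2 - x ^ 2 / (2 * s) := by
  unfold gaussKernel
  rw [log_mul (by positivity) (exp_ne_zero _), log_inv, log_exp, log_sqrt (by positivity)]
  ring

lemma hasDerivAt_gaussKernel (hs : 0 < s) (x : ℝ) :
    HasDerivAt (gaussKernel s) (-(x / s) * gaussKernel s x) x := by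
  have h := (((hasDerivAt_pow 2 x).fun_neg.div_const (2 * s)).exp).const_mul (√(2 * π * s))⁻¹
  refine h.congr_deriv ?_
  unfold gaussKernel
  field_simp
  ring

/-- The heat equation `∂ₛ g = ½ ∂ₓ² g`. -/
lemma hasDerivAt_gaussKernel_variance (hs : 0 < s) (x : ℝ) :
    HasDerivAt (fun s => gaussKernel s x) (((x / s) ^ 2 - 1 / s) / 2 * gaussKernel s x) s := by
  have hlin : HasDerivAt (fun s => 2 * π * s) (2 * π) s := by
    simpa using (hasDerivAt_id' s).const_mul (2 * π)
  have hexp : HasDerivAt (fun s => -x ^ 2 / (2 * s)) (x ^ 2 / (2 * s ^ 2)) s := by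
    have e : (fun t => -x ^ 2 / (2 * t)) = fun t => -x ^ 2 / 2 * t⁻¹ := by ext t; ring
    rw [e]
    refine ((hasDerivAt_inv hs.ne').const_mul (-x ^ 2 / 2)).congr_deriv ?_
    field_simp
  have h := ((hlin.sqrt (by positivity)).fun_inv (by positivity)).mul hexp.exp
  refine h.congr_deriv ?_
  have hsq : √(2 * π * s) ^ 2 = 2 * π * s := sq_sqrt (by positivity)
  unfold gaussKernel
  field_simp
  rw [hsq]
  ring

end GaussKernel

section WeightedVar

variable {ι : Type*} [Fintype ι]

-- The weights `q` are not normalised: this is `(∑ i, q i) * Var`.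
noncomputable def weightedVar (q x : ι → ℝ) : ℝ :=
  ∑ j, q j * (x j - (∑ i, x i * q i) / ∑ i, q i) ^ 2

lemma weightedVar_eq_sum_mul_sub (q x : ι → ℝ) :
    weightedVar q x = ∑ j, q j * x j * (x j - (∑ i, x i * q i) / ∑ i, q i) := by
  set m := (∑ i, x i * q i) / ∑ i, q i
  have hcentre : m * ∑ j, q j * (x j - m) = 0 := by
    rcases eq_or_ne (∑ i, q i) 0 with h | h
    · simp [m, h]
    · simp only [mul_sub, sum_sub_distrib, ← sum_mul, m]
      rw [sum_congr rfl fun i _ => mul_comm (q i) (x i)]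
      field_simp
      ring
  calc ∑ j, q j * (x j - m) ^ 2 = ∑ j, q j * x j * (x j - m) - m * ∑ j, q j * (x j - m) := by
        rw [mul_sum, ← sum_sub_distrib]
        exact sum_congr rfl fun j _ => by ring
    _ = _ := by rw [hcentre, sub_zero]

lemma weightedVar_const_mul (q x : ι → ℝ) (d : ℝ) :
    weightedVar q (fun j => d * x j) = d ^ 2 * weightedVar q x := by
  unfold weightedVar
  simp only [mul_assoc, ← mul_sum, mul_div_assoc, ← mul_sub, mul_pow]
  rw [mul_sum]
  exact sum_congr rfl fun j _ => by ring

lemma weightedVar_const_add {q : ι → ℝ} (hq : ∑ i, q i ≠ 0) (x : ι → ℝ) (c : ℝ) :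
    weightedVar q (fun j => c + x j) = weightedVar q x := by
  unfold weightedVar
  have hmean : (∑ i, (c + x i) * q i) / ∑ i, q i = c + (∑ i, x i * q i) / ∑ i, q i := by
    simp only [add_mul, sum_add_distrib, ← mul_sum]
    field_simp
  rw [hmean]
  exact sum_congr rfl fun j _ => by ring

lemma abs_sum_mul_div_sum_le {q : ι → ℝ} (hq : ∀ i, 0 ≤ q i) (x : ι → ℝ) :
    |(∑ i, x i * q i) / ∑ i, q i| ≤ ∑ i, |x i| := by
  rcases (sum_nonneg fun i _ => hq i).eq_or_lt with h | h
  · rw [← h, div_zero, abs_zero]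
    exact sum_nonneg fun i _ => abs_nonneg _
  rw [abs_div, abs_of_pos h, div_le_iff₀ h]
  calc |∑ i, x i * q i| ≤ ∑ i, |x i| * q i := by
        refine (abs_sum_le_sum_abs _ _).trans_eq (sum_congr rfl fun i _ => ?_)
        rw [abs_mul, abs_of_nonneg (hq i)]
    _ ≤ ∑ i, |x i| * ∑ k, q k := sum_le_sum fun i _ => mul_le_mul_of_nonneg_left
        (single_le_sum (fun k _ => hq k) (mem_univ i)) (abs_nonneg _)
    _ = _ := (sum_mul _ _ _).symm

end WeightedVar

section MixtureCalculus

variable {ι : Type*} [Fintype ι] {w : ι → ℝ} {u v : ι → ℝ → ℝ} {u' v' : ι → ℝ} {t : ℝ}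

lemma hasDerivAt_sum_mul_log_div (hw : ∀ j, 0 < w j) (hu : ∀ j, HasDerivAt (u j) (u' j) t)
    (hv : ∀ j, HasDerivAt (v j) (v' j) t) (hpos : ∀ j, 0 < u j t) :
    HasDerivAt (fun t => ∑ j, w j * v j t * log (u j t / ∑ i, w i * u i t))
      (∑ j, w j * (v' j * log (u j t / ∑ i, w i * u i t)
        + v j t * (u' j / u j t - (∑ i, w i * u' i) / ∑ i, w i * u i t))) t := by
  have hP : HasDerivAt (fun t => ∑ i, w i * u i t) (∑ i, w i * u' i) t :=
    HasDerivAt.fun_sum fun i _ => (hu i).const_mul (w i)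
  refine HasDerivAt.fun_sum fun j _ => ?_
  have hPpos : 0 < ∑ i, w i * u i t := lt_of_lt_of_le (mul_pos (hw j) (hpos j))
    (single_le_sum (f := fun i => w i * u i t) (fun i _ => (mul_pos (hw i) (hpos i)).le)
      (mem_univ j))
  have hlog := ((hu j).fun_div hP hPpos.ne').log (div_pos (hpos j) hPpos).ne'
  refine (((hv j).const_mul (w j)).mul hlog).congr_deriv ?_
  have := hpos j
  field_simp

/-- Perturbing the components of a mixture, the `+ 1` from differentiating `x log x` cancels. -/
lemma hasDerivAt_sum_mul_log_div_self [Nonempty ι] (hw : ∀ j, 0 < w j)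
    (hu : ∀ j, HasDerivAt (u j) (u' j) t) (hpos : ∀ j, 0 < u j t) :
    HasDerivAt (fun t => ∑ j, w j * u j t * log (u j t / ∑ i, w i * u i t))
      (∑ j, w j * u' j * log (u j t / ∑ i, w i * u i t)) t := by
  refine (hasDerivAt_sum_mul_log_div hw hu hu hpos).congr_deriv ?_
  have hPpos : 0 < ∑ i, w i * u i t :=
    sum_pos (fun i _ => mul_pos (hw i) (hpos i)) univ_nonempty
  have hterm : ∀ j, w j * (u' j * log (u j t / ∑ i, w i * u i t)
      + u j t * (u' j / u j t - (∑ i, w i * u' i) / ∑ i, w i * u i t))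
      = w j * u' j * log (u j t / ∑ i, w i * u i t)
        + (w j * u' j - w j * u j t * ((∑ i, w i * u' i) / ∑ i, w i * u i t)) := fun j => by
    have := hpos j
    field_simp
  rw [sum_congr rfl fun j _ => hterm j, sum_add_distrib, sum_sub_distrib, ← sum_mul,
    mul_div_cancel₀ _ hPpos.ne', sub_self, add_zero]

end MixtureCalculus

section GaussianBounds

variable {a b : ℝ}

lemma gaussKernel_sub_le (ha : 0 < a) {s : ℝ} (hs : s ∈ Set.Icc a b) (m y : ℝ) :
    gaussKernel s (y - m) ≤
      (√(2 * π * a))⁻¹ * exp (m ^ 2 / (2 * a)) * exp (-(1 / (4 * b)) * y ^ 2) := by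
  have hs0 : 0 < s := ha.trans_le hs.1
  have hb : 0 < b := hs0.trans_le hs.2
  have hexp : -(y - m) ^ 2 / (2 * s) ≤ m ^ 2 / (2 * a) + -(1 / (4 * b)) * y ^ 2 := by
    have hsq : y ^ 2 / 2 - m ^ 2 ≤ (y - m) ^ 2 := by nlinarith [sq_nonneg (y - 2 * m)]
    have h1 : -(y - m) ^ 2 / (2 * s) ≤ m ^ 2 / (2 * s) - y ^ 2 / (4 * s) := by
      rw [show m ^ 2 / (2 * s) - y ^ 2 / (4 * s) = -(y ^ 2 / 2 - m ^ 2) / (2 * s) by ring]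
      exact div_le_div_of_nonneg_right (by linarith) (by positivity)
    have h2 : m ^ 2 / (2 * s) ≤ m ^ 2 / (2 * a) :=
      div_le_div_of_nonneg_left (sq_nonneg m) (by positivity) (by linarith [hs.1])
    have h3 : y ^ 2 / (4 * b) ≤ y ^ 2 / (4 * s) :=
      div_le_div_of_nonneg_left (sq_nonneg y) (by positivity) (by linarith [hs.2])
    have h4 : -(1 / (4 * b)) * y ^ 2 = -(y ^ 2 / (4 * b)) := by ring
    linarith
  calc gaussKernel s (y - m) = (√(2 * π * s))⁻¹ * exp (-(y - m) ^ 2 / (2 * s)) := rfl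
    _ ≤ (√(2 * π * a))⁻¹ * exp (m ^ 2 / (2 * a) + -(1 / (4 * b)) * y ^ 2) := by
        gcongr
        linarith [hs.1]
    _ = _ := by rw [exp_add]; ring

lemma polyGaussBounded_gaussKernel (ha : 0 < a) (m : ℝ) :
    PolyGaussBounded (Set.Icc a b) (1 / (4 * b)) fun s y => gaussKernel s (y - m) :=
  ⟨(√(2 * π * a))⁻¹ * exp (m ^ 2 / (2 * a)), by positivity, 0, fun s hs y => by
    rw [abs_of_pos (gaussKernel_pos (ha.trans_le hs.1) _), pow_zero, mul_one]
    exact gaussKernel_sub_le ha hs m y⟩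

lemma polyGaussBounded_score (ha : 0 < a) (m : ℝ) :
    PolyGaussBounded (Set.Icc a b) 0 fun s y => (y - m) / s := by
  have hinv : PolyGaussBounded (Set.Icc a b) 0 fun s _ => s⁻¹ :=
    .of_continuousOn isCompact_Icc
      (continuousOn_inv₀.mono fun s hs => (ha.trans_le (Set.mem_Icc.mp hs).1).ne')
  simpa only [div_eq_mul_inv] using (PolyGaussBounded.id_right.sub (.const m)).mul hinv

lemma polyGaussBounded_log_gaussKernel (ha : 0 < a) (m : ℝ) :
    PolyGaussBounded (Set.Icc a b) 0 fun s y => log (gaussKernel s (y - m)) := by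
  have hlog : PolyGaussBounded (Set.Icc a b) 0 fun s _ => -log (2 * π * s) / 2 :=
    .of_continuousOn isCompact_Icc <| by
      refine ((continuousOn_const.mul continuousOn_id).log fun s hs => ?_).neg.div_const 2
      have := ha.trans_le (Set.mem_Icc.mp hs).1
      exact (by positivity : (0 : ℝ) < 2 * π * s).ne'
  have hquad :=
    (polyGaussBounded_score (b := b) ha m).mul (PolyGaussBounded.id_right.sub (.const m))
  refine (hlog.sub (hquad.mul (.const 2⁻¹))).congr fun s hs y => ?_
  rw [log_gaussKernel (ha.trans_le hs.1)]
  ring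

end GaussianBounds

section GaussianMixture

variable {ι : Type*} [Fintype ι] (w μ : ι → ℝ)

noncomputable def mixtureDensity (s y : ℝ) : ℝ := ∑ j, w j * gaussKernel s (y - μ j)

noncomputable def infoDensity (s y : ℝ) : ℝ :=
  ∑ j, w j * gaussKernel s (y - μ j) * log (gaussKernel s (y - μ j) / mixtureDensity w μ s y)

noncomputable def infoDensityDeriv (s y : ℝ) : ℝ :=
  ∑ j, w j * ((((y - μ j) / s) ^ 2 - 1 / s) / 2 * gaussKernel s (y - μ j)) *
    log (gaussKernel s (y - μ j) / mixtureDensity w μ s y)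

-- `∑ⱼ wⱼ ∂ᵧgⱼ log (gⱼ / P)`, the function integrated by parts in `y`.
noncomputable def infoFlux (s y : ℝ) : ℝ :=
  ∑ j, w j * (-((y - μ j) / s) * gaussKernel s (y - μ j)) *
    log (gaussKernel s (y - μ j) / mixtureDensity w μ s y)

noncomputable def mmseDensity (s y : ℝ) : ℝ :=
  weightedVar (fun j => w j * gaussKernel s (y - μ j)) μ

variable {w μ} {a b s : ℝ}

lemma abs_log_mixtureDensity_le (hw : ∀ j, 0 < w j) (hw1 : ∑ j, w j = 1) (hs : 0 < s)
    (j : ι) (y : ℝ) :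
    |log (mixtureDensity w μ s y)| ≤
      |log (2 * π * s)| / 2 + |log (w j)| + |log (gaussKernel s (y - μ j))| := by
  have hterm : 0 < w j * gaussKernel s (y - μ j) := mul_pos (hw j) (gaussKernel_pos hs _)
  have hlower : w j * gaussKernel s (y - μ j) ≤ mixtureDensity w μ s y :=
    single_le_sum (f := fun i => w i * gaussKernel s (y - μ i))
      (fun i _ => (mul_pos (hw i) (gaussKernel_pos hs _)).le) (mem_univ j)
  have hupper : mixtureDensity w μ s y ≤ (√(2 * π * s))⁻¹ := by
    calc mixtureDensity w μ s y ≤ ∑ i, w i * (√(2 * π * s))⁻¹ :=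
          sum_le_sum fun i _ => mul_le_mul_of_nonneg_left (gaussKernel_le hs.le _) (hw i).le
      _ = (√(2 * π * s))⁻¹ := by rw [← sum_mul, hw1, one_mul]
  have hP := hterm.trans_le hlower
  have hlog_lower := log_le_log hterm hlower
  have hlog_upper := log_le_log hP hupper
  rw [log_mul (hw j).ne' (gaussKernel_pos hs _).ne'] at hlog_lower
  rw [log_inv, log_sqrt (by positivity)] at hlog_upper
  rw [abs_le]
  constructor <;>
    linarith [neg_abs_le (log (w j)), neg_abs_le (log (gaussKernel s (y - μ j))),
      neg_abs_le (log (2 * π * s)), abs_nonneg (log (2 * π * s)), abs_nonneg (log (w j)),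
      abs_nonneg (log (gaussKernel s (y - μ j)))]

lemma polyGaussBounded_log_div_mixtureDensity (hw : ∀ j, 0 < w j) (hw1 : ∑ j, w j = 1)
    (ha : 0 < a) (j : ι) :
    PolyGaussBounded (Set.Icc a b) 0
      fun s y => log (gaussKernel s (y - μ j) / mixtureDensity w μ s y) := by
  have hpos : ∀ s ∈ Set.Icc a b, 0 < s := fun s hs => ha.trans_le hs.1
  have hlogk := polyGaussBounded_log_gaussKernel (b := b) ha (μ j)
  have hconst : PolyGaussBounded (Set.Icc a b) 0 fun s _ => |log (2 * π * s)| / 2 + |log (w j)| :=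
    .of_continuousOn isCompact_Icc <| by
      refine (((continuousOn_const.mul continuousOn_id).log fun s hs => ?_).abs.div_const 2).add
        continuousOn_const
      exact (mul_pos two_pi_pos (hpos s hs)).ne'
  have hlogP : PolyGaussBounded (Set.Icc a b) 0 fun s y => log (mixtureDensity w μ s y) :=
    (hconst.add (hlogk.mono fun s _ y => (abs_abs _).le)).mono fun s hs y =>
      (abs_log_mixtureDensity_le hw hw1 (hpos s hs) j y).trans (le_abs_self _)
  refine (hlogk.sub hlogP).congr fun s hs y => (log_div ?_ ?_).symm
  · exact (gaussKernel_pos (hpos s hs) _).ne'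
  · exact (sum_pos (fun i _ => mul_pos (hw i) (gaussKernel_pos (hpos s hs) _))
      ⟨j, mem_univ j⟩).ne'

lemma polyGaussBounded_sum_mul_gaussKernel (ha : 0 < a) {φ : ι → ℝ → ℝ → ℝ}
    (hφ : ∀ j, PolyGaussBounded (Set.Icc a b) 0 (φ j)) :
    PolyGaussBounded (Set.Icc a b) (1 / (4 * b))
      fun s y => ∑ j, w j * gaussKernel s (y - μ j) * φ j s y := by
  refine PolyGaussBounded.sum _ fun j _ => ?_
  refine ((polyGaussBounded_gaussKernel ha (μ j)).mul
    ((PolyGaussBounded.const (w j)).mul (hφ j))).congr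
    fun s _ y => ?_
  ring

lemma polyGaussBounded_infoDensity (hw : ∀ j, 0 < w j) (hw1 : ∑ j, w j = 1) (ha : 0 < a) :
    PolyGaussBounded (Set.Icc a b) (1 / (4 * b)) (infoDensity w μ) :=
  polyGaussBounded_sum_mul_gaussKernel ha (polyGaussBounded_log_div_mixtureDensity hw hw1 ha)

lemma polyGaussBounded_infoDensityDeriv (hw : ∀ j, 0 < w j) (hw1 : ∑ j, w j = 1) (ha : 0 < a) :
    PolyGaussBounded (Set.Icc a b) (1 / (4 * b)) (infoDensityDeriv w μ) := by
  have hinv : PolyGaussBounded (Set.Icc a b) 0 fun s _ => 1 / s :=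
    .of_continuousOn isCompact_Icc <| continuousOn_const.div continuousOn_id
      fun s hs => (ha.trans_le (Set.mem_Icc.mp hs).1).ne'
  refine (polyGaussBounded_sum_mul_gaussKernel (w := w) (μ := μ) ha fun j =>
    ((((polyGaussBounded_score ha (μ j)).mul (polyGaussBounded_score ha (μ j))).sub hinv).mul
      (.const 2⁻¹)).mul (polyGaussBounded_log_div_mixtureDensity (μ := μ) hw hw1 ha j)).congr
    fun s _ y => sum_congr rfl fun j _ => ?_
  ring

lemma polyGaussBounded_infoFlux (hw : ∀ j, 0 < w j) (hw1 : ∑ j, w j = 1) (ha : 0 < a) :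
    PolyGaussBounded (Set.Icc a b) (1 / (4 * b)) (infoFlux w μ) := by
  refine (polyGaussBounded_sum_mul_gaussKernel (w := w) (μ := μ) ha fun j =>
    (polyGaussBounded_score ha (μ j)).neg.mul
      (polyGaussBounded_log_div_mixtureDensity (μ := μ) hw hw1 ha j)).congr
    fun s _ y => sum_congr rfl fun j _ => ?_
  ring

lemma polyGaussBounded_mmseDensity (hw : ∀ j, 0 < w j) (ha : 0 < a) :
    PolyGaussBounded (Set.Icc a b) (1 / (4 * b)) (mmseDensity w μ) := by
  refine polyGaussBounded_sum_mul_gaussKernel ha fun j => ?_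
  refine (PolyGaussBounded.const ((2 * ∑ i, |μ i|) ^ 2)).mono fun s hs y => ?_
  have hmean := abs_sum_mul_div_sum_le
    (fun i => (mul_pos (hw i) (gaussKernel_pos (ha.trans_le hs.1) (y - μ i))).le) μ
  have hj : |μ j| ≤ ∑ i, |μ i| := single_le_sum (fun i _ => abs_nonneg (μ i)) (mem_univ j)
  rw [abs_pow, abs_pow, abs_of_nonneg (by positivity : 0 ≤ 2 * ∑ i, |μ i|)]
  exact pow_le_pow_left₀ (abs_nonneg _) ((abs_sub _ _).trans (by linarith)) 2

end GaussianMixture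

section Measurability

variable {ι : Type*} [Fintype ι] (w μ : ι → ℝ) (s : ℝ)

lemma measurable_infoDensity : Measurable (infoDensity w μ s) := by
  unfold infoDensity mixtureDensity; fun_prop

lemma measurable_infoDensityDeriv : Measurable (infoDensityDeriv w μ s) := by
  unfold infoDensityDeriv mixtureDensity; fun_prop

lemma measurable_infoFlux : Measurable (infoFlux w μ s) := by
  unfold infoFlux mixtureDensity; fun_prop

lemma measurable_mmseDensity : Measurable (mmseDensity w μ s) := by
  unfold mmseDensity weightedVar; fun_prop

end Measurability

section MixtureDerivatives

variable {ι : Type*} [Fintype ι] [Nonempty ι] {w μ : ι → ℝ} {s : ℝ}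

lemma hasDerivAt_infoDensity (hw : ∀ j, 0 < w j) (hs : 0 < s) (y : ℝ) :
    HasDerivAt (fun s => infoDensity w μ s y) (infoDensityDeriv w μ s y) s :=
  hasDerivAt_sum_mul_log_div_self (u := fun j s => gaussKernel s (y - μ j)) hw
    (fun _ => hasDerivAt_gaussKernel_variance hs _) (fun _ => gaussKernel_pos hs _)

lemma hasDerivAt_infoFlux (hw : ∀ j, 0 < w j) (hs : 0 < s) (y : ℝ) :
    HasDerivAt (infoFlux w μ s) (2 * infoDensityDeriv w μ s y + mmseDensity w μ s y / s ^ 2) y := by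
  have hu : ∀ j, HasDerivAt (fun y => gaussKernel s (y - μ j))
      (-((y - μ j) / s) * gaussKernel s (y - μ j)) y := fun j =>
    (hasDerivAt_gaussKernel hs (y - μ j)).comp_sub_const y (μ j)
  have hv : ∀ j, HasDerivAt (fun y => -((y - μ j) / s) * gaussKernel s (y - μ j))
      ((((y - μ j) / s) ^ 2 - 1 / s) * gaussKernel s (y - μ j)) y := fun j => by
    refine ((((hasDerivAt_id' y).sub_const (μ j)).div_const s).fun_neg.mul (hu j)).congr_deriv ?_
    ring
  refine (hasDerivAt_sum_mul_log_div hw hu hv fun j => gaussKernel_pos hs _).congr_deriv ?_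
  set q := fun j => w j * gaussKernel s (y - μ j)
  have hq : 0 < ∑ i, q i := sum_pos (fun i _ => mul_pos (hw i) (gaussKernel_pos hs _)) univ_nonempty
  have hscore : (∑ i, w i * (-((y - μ i) / s) * gaussKernel s (y - μ i))) / ∑ i, q i
      = -((∑ i, (y - μ i) / s * q i) / ∑ i, q i) := by
    rw [← neg_div, ← sum_neg_distrib]
    exact congrArg (· / _) (sum_congr rfl fun i _ => by ring)
  have hvar : mmseDensity w μ s y / s ^ 2 = weightedVar q fun j => (y - μ j) / s := by
    have hshift : (fun j => (y - μ j) / s) = fun j => -(1 / s) * (-y + μ j) := by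
      ext j; field_simp; ring
    rw [hshift, weightedVar_const_mul, weightedVar_const_add hq.ne']
    show weightedVar q μ / s ^ 2 = _
    ring
  rw [hvar, weightedVar_eq_sum_mul_sub, infoDensityDeriv, mul_sum, ← sum_add_distrib]
  refine sum_congr rfl fun j _ => ?_
  simp only [q, mixtureDensity] at hscore ⊢
  rw [hscore]
  have := gaussKernel_pos hs (y - μ j)
  field_simp
  ring

lemma integral_infoDensityDeriv (hw : ∀ j, 0 < w j) (hw1 : ∑ j, w j = 1) (hs : 0 < s) :
    ∫ y, infoDensityDeriv w μ s y = -(1 / (2 * s ^ 2)) * ∫ y, mmseDensity w μ s y := by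
  have hsS : s ∈ Set.Icc s s := Set.left_mem_Icc.mpr le_rfl
  have hβ : 0 < 1 / (4 * s) := by positivity
  have hderiv_int : Integrable (infoDensityDeriv w μ s) :=
    (polyGaussBounded_infoDensityDeriv hw hw1 hs).integrable hβ hsS
      (measurable_infoDensityDeriv w μ s).aestronglyMeasurable
  have hmmse_int : Integrable (mmseDensity w μ s) :=
    (polyGaussBounded_mmseDensity hw hs).integrable hβ hsS
      (measurable_mmseDensity w μ s).aestronglyMeasurable
  have hflux_int : Integrable (infoFlux w μ s) :=
    (polyGaussBounded_infoFlux hw hw1 hs).integrable hβ hsS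
      (measurable_infoFlux w μ s).aestronglyMeasurable
  have hflux : ∫ y, (2 * infoDensityDeriv w μ s y + mmseDensity w μ s y / s ^ 2) = 0 :=
    integral_eq_zero_of_hasDerivAt_of_integrable (fun y => hasDerivAt_infoFlux hw hs y)
      ((hderiv_int.const_mul 2).add (hmmse_int.div_const _)) hflux_int
  rw [integral_add (hderiv_int.const_mul 2) (hmmse_int.div_const _), integral_const_mul,
    integral_div] at hflux
  linear_combination hflux / 2

end MixtureDerivatives

theorem hasDerivAt_integral_infoDensity {ι : Type*} [Fintype ι] {w : ι → ℝ} (μ : ι → ℝ)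
    (hw : ∀ j, 0 < w j) (hw1 : ∑ j, w j = 1) {s : ℝ} (hs : 0 < s) :
    HasDerivAt (fun s => ∫ y, infoDensity w μ s y)
      (-(1 / (2 * s ^ 2)) * ∫ y, mmseDensity w μ s y) s := by
  obtain ⟨j, -⟩ := nonempty_of_sum_ne_zero (hw1.trans_ne one_ne_zero)
  have : Nonempty ι := ⟨j⟩
  let S := Set.Icc (s / 2) (2 * s)
  have hβ : 0 < 1 / (4 * (2 * s)) := by positivity
  have hballS : Metric.ball s (s / 2) ⊆ S := fun t ht => by
    rw [Metric.mem_ball, Real.dist_eq, abs_lt] at ht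
    exact ⟨by linarith, by linarith⟩
  have hpos : ∀ t ∈ S, 0 < t := fun t ht => (half_pos hs).trans_le ht.1
  obtain ⟨bound, hbound_int, hbound⟩ :=
    (polyGaussBounded_infoDensityDeriv (μ := μ) hw hw1 (half_pos hs)).exists_integrable_bound hβ
  rw [← integral_infoDensityDeriv hw hw1 hs]
  exact (hasDerivAt_integral_of_dominated_loc_of_deriv_le (Metric.ball_mem_nhds s (half_pos hs))
    (Filter.Eventually.of_forall fun t => (measurable_infoDensity w μ t).aestronglyMeasurable)
    ((polyGaussBounded_infoDensity hw hw1 (half_pos hs)).integrable hβ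
      ⟨by linarith, by linarith⟩ (measurable_infoDensity w μ s).aestronglyMeasurable)
    (measurable_infoDensityDeriv w μ s).aestronglyMeasurable
    (ae_of_all _ fun y t ht => hbound t (hballS ht) y) hbound_int
    (ae_of_all _ fun y t ht => hasDerivAt_infoDensity hw (hpos t (hballS ht)) y)).2

theorem stmt_8_general {ι : Type*} [Fintype ι]
    (v : ι → ℝ) (p₂ : ι → ℝ) (hp₂pos : ∀ j, 0 < p₂ j) (hp₂sum : ∑ j, p₂ j = 1)
    (snr h₁₁ h₁₂ P₂ : ℝ) (hsnr : 0 < snr) (hP₂ : 0 < P₂)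
    (φ : ℝ → ℝ) (hφ : φ = fun t => (Real.sqrt (2 * Real.pi))⁻¹ * Real.exp (-t ^ 2 / 2))
    (σf : ℝ → ℝ) (hσf : σf = fun P₁ => Real.sqrt (h₁₁ ^ 2 * P₁ + 1))
    (pyx : ℝ → ℝ → ι → ℝ)
    (hpyx : pyx = fun P₁ y j =>
        (1 / σf P₁) * φ ((y - Real.sqrt snr * h₁₂ * Real.sqrt P₂ * v j) / σf P₁))
    (py : ℝ → ℝ → ℝ) (hpy : py = fun P₁ y => ∑ j, p₂ j * pyx P₁ y j)
    (I : ℝ → ℝ)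
    (hI : I = fun P₁ => ∫ y : ℝ, ∑ j, p₂ j * pyx P₁ y j *
        Real.log (pyx P₁ y j / py P₁ y))
    (xhat : ℝ → ℝ → ℝ)
    (hxhat : xhat = fun P₁ y => (∑ j, v j * (p₂ j * pyx P₁ y j)) / py P₁ y)
    (E₂₂ : ℝ → ℝ)
    (hE₂₂ : E₂₂ = fun P₁ => ∫ y : ℝ, ∑ j, p₂ j * pyx P₁ y j * (v j - xhat P₁ y) ^ 2) :
    ∀ P₁ : ℝ, 0 ≤ P₁ →
      HasDerivAt I
        (-(snr * h₁₁ ^ 2 * h₁₂ ^ 2 * P₂) / (2 * (h₁₁ ^ 2 * P₁ + 1) ^ 2) * E₂₂ P₁) P₁ := by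
  intro P₁ hP₁
  subst hφ hσf hpyx hpy hI hxhat hE₂₂
  set a := √snr * h₁₂ * √P₂
  have ha : a ^ 2 = snr * h₁₂ ^ 2 * P₂ := by
    rw [mul_pow, mul_pow, sq_sqrt hsnr.le, sq_sqrt hP₂.le]
  beta_reduce
  set μ : ι → ℝ := fun j => a * v j
  have hs : 0 < h₁₁ ^ 2 * P₁ + 1 := by positivity
  have hnear : ∀ᶠ x in nhds P₁, 0 < h₁₁ ^ 2 * x + 1 :=
    continuousAt_const.eventually_lt (by fun_prop) hs
  have hinfo := (hasDerivAt_integral_infoDensity μ hp₂pos hp₂sum hs).comp P₁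
    (((hasDerivAt_id' P₁).const_mul (h₁₁ ^ 2)).add_const 1)
  refine hinfo.congr_of_eventuallyEq ?_ |>.congr_deriv ?_
  · filter_upwards [hnear] with x hx
    simp only [← gaussKernel_eq_div_sqrt hx.le]
    rfl
  · set s := h₁₁ ^ 2 * P₁ + 1
    have hmmse : ∀ y, mmseDensity p₂ μ s y =
        a ^ 2 * weightedVar (fun j => p₂ j * gaussKernel s (y - a * v j)) v :=
      fun y => weightedVar_const_mul _ v a
    simp only [← gaussKernel_eq_div_sqrt hs.le, integral_congr_ae (ae_of_all _ hmmse),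
      integral_const_mul, weightedVar]
    rw [ha]
    ring

/-- Paper's Theorem 3 (real-valued convention): gradient of the interference-as-noise mutual
information of user 2 with respect to the interferer's power `P₁`. User 1's signal is absorbed
into the Gaussian noise with variance `h₁₁²P₁ + 1`, and
`dI/dP₁ = -(snr·h₁₁²·h₁₂²·P₂)/(2·(h₁₁²·P₁+1)²) · E₂₂(P₁)`. -/
theorem stmt_8 {ι : Type*} [Fintype ι]
    (v : ι → ℝ) (p₂ : ι → ℝ) (hp₂pos : ∀ j, 0 < p₂ j) (hp₂sum : ∑ j, p₂ j = 1)
    (snr h₁₁ h₁₂ P₂ : ℝ) (hsnr : 0 < snr) (hh₁₁ : 0 < h₁₁) (hh₁₂ : 0 < h₁₂) (hP₂ : 0 < P₂)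
    (φ : ℝ → ℝ) (hφ : φ = fun t => (Real.sqrt (2 * Real.pi))⁻¹ * Real.exp (-t ^ 2 / 2))
    (σf : ℝ → ℝ) (hσf : σf = fun P₁ => Real.sqrt (h₁₁ ^ 2 * P₁ + 1))
    (pyx : ℝ → ℝ → ι → ℝ)
    (hpyx : pyx = fun P₁ y j =>
        (1 / σf P₁) * φ ((y - Real.sqrt snr * h₁₂ * Real.sqrt P₂ * v j) / σf P₁))
    (py : ℝ → ℝ → ℝ) (hpy : py = fun P₁ y => ∑ j, p₂ j * pyx P₁ y j)
    (I : ℝ → ℝ)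
    (hI : I = fun P₁ => ∫ y : ℝ, ∑ j, p₂ j * pyx P₁ y j *
        Real.log (pyx P₁ y j / py P₁ y))
    (xhat : ℝ → ℝ → ℝ)
    (hxhat : xhat = fun P₁ y => (∑ j, v j * (p₂ j * pyx P₁ y j)) / py P₁ y)
    (E₂₂ : ℝ → ℝ)
    (hE₂₂ : E₂₂ = fun P₁ => ∫ y : ℝ, ∑ j, p₂ j * pyx P₁ y j * (v j - xhat P₁ y) ^ 2) :
    ∀ P₁ : ℝ, 0 ≤ P₁ →
      HasDerivAt I
        (-(snr * h₁₁ ^ 2 * h₁₂ ^ 2 * P₂) / (2 * (h₁₁ ^ 2 * P₁ + 1) ^ 2) * E₂₂ P₁) P₁ :=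
  stmt_8_general v p₂ hp₂pos hp₂sum snr h₁₁ h₁₂ P₂ hsnr hP₂ φ hφ σf hσf pyx hpyx py hpy I hI xhat
    hxhat E₂₂ hE₂₂
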